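/- arXiv:0906.4157 — 2 statements merged into one kernel-verified Lean document; each statement's English description precedes it below -/
import Mathlib

section
/- Let A, B, C be positive real-valued functions solving the normalized Ricci flow ODE system (⋆) on an open interval I containing 0. Then the product A(t)B(t)C(t) is constant on I; that is, A(t)B(t)C(t) = A(0)B(0)C(0) for all t ∈ I. -/
open Real Filter Set Topology

/-- Right-hand side of the normalized Ricci flow ODE (⋆) for `A`. -/
noncomputable def ricciA (A B C : ℝ) : ℝ :=
  (2 / 3) * (-A ^ 2 * (2 * A + B + C) + A * (B - C) ^ 2)

/-- Right-hand side of the normalized Ricci flow ODE (⋆) for `B`. -/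
noncomputable def ricciB (A B C : ℝ) : ℝ :=
  (2 / 3) * (-B ^ 2 * (2 * B + A - C) + B * (A + C) ^ 2)

/-- Right-hand side of the normalized Ricci flow ODE (⋆) for `C`. -/
noncomputable def ricciC (A B C : ℝ) : ℝ :=
  (2 / 3) * (-C ^ 2 * (2 * C + A - B) + C * (A + B) ^ 2)

/-- `(A, B, C)` is a positive solution of the normalized Ricci flow ODE system (⋆) on `I`. -/
def IsRicciSolOn (A B C : ℝ → ℝ) (I : Set ℝ) : Prop :=
  ∀ t ∈ I, 0 < A t ∧ 0 < B t ∧ 0 < C t ∧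
    HasDerivAt A (ricciA (A t) (B t) (C t)) t ∧
    HasDerivAt B (ricciB (A t) (B t) (C t)) t ∧
    HasDerivAt C (ricciC (A t) (B t) (C t)) t

/-! The volume `A B C` is a first integral of (⋆): by the product rule its derivative is
`A' B C + A B' C + A B C'`, and after substituting (⋆) this cubic form vanishes identically.
A function with zero derivative on an interval is constant. -/

theorem ricci_volume_deriv_eq_zero (a b c : ℝ) :
    ricciA a b c * b * c + a * ricciB a b c * c + a * b * ricciC a b c = 0 := by
  simp only [ricciA, ricciB, ricciC]
  ring

theorem Convex.eq_of_forall_hasDerivAt_zero {E : Type*} [NormedAddCommGroup E]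
    [NormedSpace ℝ E] {f : ℝ → E} {s : Set ℝ} (hs : Convex ℝ s)
    (hf : ∀ x ∈ s, HasDerivAt f 0 x) {x y : ℝ} (hx : x ∈ s) (hy : y ∈ s) : f x = f y := by
  have h := hs.norm_image_sub_le_of_norm_hasDerivWithin_le
    (fun z hz => (hf z hz).hasDerivWithinAt) (fun _ _ => norm_zero.le) hy hx
  rw [zero_mul, norm_le_zero_iff, sub_eq_zero] at h
  exact h

theorem IsRicciSolOn.hasDerivAt_volume {A B C : ℝ → ℝ} {I : Set ℝ} (hsol : IsRicciSolOn A B C I)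
    {t : ℝ} (ht : t ∈ I) : HasDerivAt (fun s => A s * B s * C s) 0 t := by
  obtain ⟨-, -, -, hA, hB, hC⟩ := hsol t ht
  refine ((hA.mul hB).mul hC).congr_deriv ?_
  rw [← ricci_volume_deriv_eq_zero (A t) (B t) (C t), Pi.mul_apply]
  ring

theorem ricci_volume_constant_general (A B C : ℝ → ℝ) (I : Set ℝ)
    (hIconn : I.OrdConnected) (h0 : (0 : ℝ) ∈ I)
    (hsol : IsRicciSolOn A B C I) :
    ∀ t ∈ I, A t * B t * C t = A 0 * B 0 * C 0 := fun _ ht =>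
  hIconn.convex.eq_of_forall_hasDerivAt_zero (fun _ hs => hsol.hasDerivAt_volume hs) ht h0

/-- Along the normalized Ricci flow (⋆) on `SL(2,ℝ)`, the product `A B C` is constant. -/
theorem ricci_volume_constant (A B C : ℝ → ℝ) (I : Set ℝ)
    (hIopen : IsOpen I) (hIconn : I.OrdConnected) (h0 : (0 : ℝ) ∈ I)
    (hsol : IsRicciSolOn A B C I) :
    ∀ t ∈ I, A t * B t * C t = A 0 * B 0 * C 0 :=
  ricci_volume_constant_general A B C I hIconn h0 hsol
end

section
/- Let A, B, C be positive real-valued functions solving the normalized Ricci flow ODE system (⋆) on an open interval I containing 0. If B(0) ≥ C(0), then B(t) ≥ C(t) for all t ∈ I; moreover, if B(0) > C(0), then B(t) > C(t) for all t ∈ I. -/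
open Real Filter Set Topology

/-! The difference `D = B - C` solves the scalar linear equation `D' = g D`, with a coefficient `g`
that is continuous along the solution. Hence `D t = D 0 * exp (∫₀ᵗ g)`, and the sign of `D 0`
propagates to the whole interval. -/

noncomputable def ricciSubCoeff (a b c : ℝ) : ℝ :=
  (2 / 3) * (a ^ 2 - a * (b + c) - 2 * (b ^ 2 + b * c + c ^ 2))

theorem ricciB_sub_ricciC (a b c : ℝ) :
    ricciB a b c - ricciC a b c = ricciSubCoeff a b c * (b - c) := by
  unfold ricciB ricciC ricciSubCoeff
  ring

theorem eq_mul_exp_integral_of_hasDerivAt_mul {I : Set ℝ} (hI : IsOpen I) (hIc : I.OrdConnected)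
    {f g : ℝ → ℝ} (hg : ContinuousOn g I) (hf : ∀ t ∈ I, HasDerivAt f (g t * f t) t)
    {t₀ t : ℝ} (ht₀ : t₀ ∈ I) (ht : t ∈ I) :
    f t = f t₀ * exp (∫ s in t₀..t, g s) := by
  set G : ℝ → ℝ := fun t => ∫ s in t₀..t, g s
  have hG : ∀ t ∈ I, HasDerivAt G (g t) t := fun t ht =>
    intervalIntegral.integral_hasDerivAt_right
      ((hg.mono (hIc.uIcc_subset ht₀ ht)).intervalIntegrable)
      (hg.stronglyMeasurableAtFilter hI t ht) (hg.continuousAt (hI.mem_nhds ht))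
  have hfG : ∀ t ∈ I, HasDerivAt (fun s => f s * exp (-G s)) 0 t := fun t ht => by
    refine ((hf t ht).mul (hG t ht).neg.exp).congr_deriv ?_
    ring
  have hconst : f t * exp (-G t) = f t₀ * exp (-G t₀) :=
    hI.is_const_of_deriv_eq_zero hIc.isPreconnected
      (fun s hs => (hfG s hs).differentiableAt.differentiableWithinAt)
      (fun s hs => (hfG s hs).deriv) ht ht₀
  have hG₀ : G t₀ = 0 := intervalIntegral.integral_same
  rw [hG₀, neg_zero, exp_zero, mul_one] at hconst
  rw [← hconst, mul_assoc, ← exp_add, neg_add_cancel, exp_zero, mul_one]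

namespace IsRicciSolOn

variable {A B C : ℝ → ℝ} {I : Set ℝ}

theorem hasDerivAt_sub (hsol : IsRicciSolOn A B C I) {t : ℝ} (ht : t ∈ I) :
    HasDerivAt (fun s => B s - C s) (ricciSubCoeff (A t) (B t) (C t) * (B t - C t)) t := by
  rw [← ricciB_sub_ricciC]
  exact (hsol t ht).2.2.2.2.1.sub (hsol t ht).2.2.2.2.2

theorem continuousOn_ricciSubCoeff (hsol : IsRicciSolOn A B C I) :
    ContinuousOn (fun t => ricciSubCoeff (A t) (B t) (C t)) I := fun t ht => by
  have hA := (hsol t ht).2.2.2.1.continuousAt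
  have hB := (hsol t ht).2.2.2.2.1.continuousAt
  have hC := (hsol t ht).2.2.2.2.2.continuousAt
  unfold ricciSubCoeff
  exact ContinuousAt.continuousWithinAt (by fun_prop)

end IsRicciSolOn

/-- Along the normalized Ricci flow (⋆) on `SL(2,ℝ)`, the ordering `B ≥ C` (resp. `B > C`)
at time `0` is preserved on the whole interval of definition. -/
theorem ricci_order_preserved (A B C : ℝ → ℝ) (I : Set ℝ)
    (hIopen : IsOpen I) (hIconn : I.OrdConnected) (h0 : (0 : ℝ) ∈ I)
    (hsol : IsRicciSolOn A B C I) (hBC : C 0 ≤ B 0) :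
    (∀ t ∈ I, C t ≤ B t) ∧ (C 0 < B 0 → ∀ t ∈ I, C t < B t) := by
  have hform : ∀ t ∈ I, B t - C t =
      (B 0 - C 0) * exp (∫ s in (0 : ℝ)..t, ricciSubCoeff (A s) (B s) (C s)) := fun t ht =>
    eq_mul_exp_integral_of_hasDerivAt_mul (f := fun s => B s - C s) hIopen hIconn
      hsol.continuousOn_ricciSubCoeff (fun s hs => hsol.hasDerivAt_sub hs) h0 ht
  refine ⟨fun t ht => ?_, fun hlt t ht => ?_⟩
  · rw [← sub_nonneg, hform t ht]
    exact mul_nonneg (sub_nonneg.mpr hBC) (exp_pos _).le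
  · rw [← sub_pos, hform t ht]
    exact mul_pos (sub_pos.mpr hlt) (exp_pos _)
end
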